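/- arXiv:0905.0769 — 2 statements merged into one kernel-verified Lean document; each statement's English description precedes it below -/
import Mathlib

section
/- For λH-terms U and V, if U →I* V (V is obtained from U by finitely many I-reduction steps), then E(U) = E(V). -/
/-- λH-terms: untyped λ-terms in de Bruijn notation with a distinguished
constant `H`. -/
inductive LamH : Type
  | var : ℕ → LamH
  | H : LamH
  | lam : LamH → LamH
  | app : LamH → LamH → LamH

namespace LamH

/-- Lift (shift by one) the de Bruijn indices ≥ `d`. -/
def lift : LamH → ℕ → LamH
  | var n, d => if n < d then var n else var (n + 1)
  | H, _ => H
  | lam u, d => lam (lift u (d + 1))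
  | app u v, d => app (lift u d) (lift v d)

/-- Capture-avoiding substitution `t[s/k]`. -/
def subst : LamH → ℕ → LamH → LamH
  | var n, k, s => if n = k then s else if k < n then var (n - 1) else var n
  | H, _, _ => H
  | lam u, k, s => lam (subst u (k + 1) (lift s 0))
  | app u v, k, s => app (subst u k s) (subst v k s)

/-- Head reduction `→t` contracting the head β-redex:
`λx̄.((λx.U) V) V₁ ... Vₖ →t λx̄.(U[V/x]) V₁ ... Vₖ`. -/
inductive Head : LamH → LamH → Prop
  | beta (u v : LamH) : Head (app (lam u) v) (subst u 0 v)
  | appL {u u' : LamH} (v : LamH) : Head u u' → (∀ w, u ≠ lam w) →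
      Head (app u v) (app u' v)
  | abs {u u' : LamH} : Head u u' → Head (lam u) (lam u')

/-- `headH t = true` iff `t` is of the form `H U₁ U₂ ... Uₙ` with `n ≥ 0`. -/
def headH : LamH → Bool
  | H => true
  | app u _ => headH u
  | _ => false

/-- Remove the head occurrence of `H`: `dropH (H U₁ U₂ ... Uₙ) = U₁ U₂ ... Uₙ`
(for `n ≥ 1`). -/
def dropH : LamH → LamH
  | app H v => v
  | app u v => app (dropH u) v
  | t => t

theorem dropH_app_size_lt : ∀ u v : LamH, headH u = true →
    sizeOf (dropH (app u v)) < sizeOf (app u v) := by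
  intro u
  induction u with
  | var n => intro v h; simp [headH] at h
  | H => intro v _; simp [dropH]
  | lam u ih => intro v h; simp [headH] at h
  | app u1 u2 ih1 ih2 =>
    intro v h
    have h1 : headH u1 = true := by simpa [headH] using h
    have : dropH (app (app u1 u2) v) = app (dropH (app u1 u2)) v := by
      cases u1 <;> rfl
    rw [this]
    have := ih1 u2 h1
    simp only [app.sizeOf_spec] at *
    omega

/-- The extraction map `E`: it erases `H` in head position of an application.
`E(x) = x`, `E(H) = H`, `E(λx.U) = λx.E(U)`,
`E(U V) = (E(U) E(V))` if `U` is not of the form `H U₁ ... Uₙ`, and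
`E(H U₁ U₂ ... Uₙ) = E(U₁ U₂ ... Uₙ)`. -/
def E : LamH → LamH
  | var n => var n
  | H => H
  | lam u => lam (E u)
  | app u v =>
    if h : headH u = true then E (dropH (app u v)) else app (E u) (E v)
termination_by t => sizeOf t
decreasing_by
  all_goals first
    | exact dropH_app_size_lt u v (by assumption)
    | (simp; omega)
    | simp

end LamH

namespace LamH

/-- The I-reduction: `λx₁...λxₘ.(H U₁ U₂ ... Uₙ) →I λx₁...λxₘ.(U₁ U₂ ... Uₙ)`
for `n ≥ 1`. -/
inductive Ired : LamH → LamH → Prop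
  | head (v : LamH) : Ired (app H v) v
  | appL {u u' : LamH} (v : LamH) : Ired u u' → (∀ w, u ≠ lam w) →
      Ired (app u v) (app u' v)
  | abs {u u' : LamH} : Ired u u' → Ired (lam u) (lam u')

end LamH

/-!
An I-step either fires at the head of a term `H U₁ ⋯ Uₙ`, where it is exactly `dropH`, the
operation that `E` performs anyway, or it happens below a head that is not `H` and that it
cannot turn into `H`, where `E` is computed componentwise.
-/

namespace LamH

theorem E_app_of_headH {u : LamH} (hu : headH u = true) (v : LamH) :
    E (app u v) = E (dropH (app u v)) := by
  rw [E, dif_pos hu]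

theorem E_app_of_not_headH {u : LamH} (hu : headH u = false) (v : LamH) :
    E (app u v) = app (E u) (E v) := by
  rw [E, dif_neg (by simp [hu])]

theorem dropH_app {u : LamH} (hu : u ≠ H) (v : LamH) : dropH (app u v) = app (dropH u) v := by
  cases u <;> first | rfl | contradiction

namespace Ired

theorem ne_H {u u' : LamH} (h : Ired u u') : u ≠ H := by
  rintro rfl
  cases h

theorem headH_eq_false {u u' : LamH} (h : Ired u u') (hu : headH u = false) :
    headH u' = false := by
  induction h with
  | head => cases hu
  | appL _ _ _ ih => exact ih hu
  | abs => rfl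

theorem dropH_eq {u u' : LamH} (h : Ired u u') (hu : headH u = true) : dropH u = u' := by
  induction h with
  | head => rfl
  | appL v hstep _ ih => rw [dropH_app hstep.ne_H, ih hu]
  | abs => cases hu

theorem E_eq {u u' : LamH} (h : Ired u u') : E u = E u' := by
  induction h with
  | head v => exact E_app_of_headH rfl v
  | @appL a a' v hstep _ ih =>
    cases ha : headH a with
    | true => rw [E_app_of_headH ha, dropH_app hstep.ne_H, hstep.dropH_eq ha]
    | false => rw [E_app_of_not_headH ha, E_app_of_not_headH (hstep.headH_eq_false ha), ih]
  | abs _ ih => rw [E, E, ih]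

end Ired

end LamH

/-- If `U →I* V`, then `E(U) = E(V)`. -/
theorem E_Ired_star (U V : LamH)
    (h : Relation.ReflTransGen LamH.Ired U V) : LamH.E U = LamH.E V := by
  induction h with
  | refl => rfl
  | tail _ hstep ih => exact ih.trans hstep.E_eq
end

section
/- Let U₁, U₂, V₁, V₂ be λH-terms and k a natural number. If U₁ →(I*,k) V₁ (V₁ is obtained from U₁ by finitely many I-reductions and exactly k head β-reductions), U₂ →(J*,k) V₂ (V₂ is obtained from U₂ by finitely many J-reductions and exactly k head β-reductions), and E(U₁) = E(U₂), then E(V₁) = E(V₂). -/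
namespace LamH

/-- The J-reduction: `λx₁...λxₘ.(H U₁ U₂ U₃ ... Uₙ) →J λx₁...λxₘ.(U₁ (H U₂) U₃ ... Uₙ)`
for `n ≥ 2`, and `λx₁...λxₘ.(H U₁) →J λx₁...λxₘ.U₁`. -/
inductive Jred : LamH → LamH → Prop
  | one (v : LamH) : Jred (app H v) v
  | two (u v : LamH) : Jred (app (app H u) v) (app u (app H v))
  | appL {u u' : LamH} (v : LamH) : Jred u u' → (∀ w, u ≠ lam w) →
      (∀ w, u ≠ app H w) → Jred (app u v) (app u' v)
  | abs {u u' : LamH} : Jred u u' → Jred (lam u) (lam u')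

end LamH

namespace LamH

/-- `U →(I*,k) V`: `V` is obtained from `U` by a finite interleaving of
I-reductions and exactly `k` head reductions `→t`. -/
inductive IredTK : ℕ → LamH → LamH → Prop
  | refl (u : LamH) : IredTK 0 u u
  | istep {k : ℕ} {u v w : LamH} : Ired u v → IredTK k v w → IredTK k u w
  | tstep {k : ℕ} {u v w : LamH} : Head u v → IredTK k v w → IredTK (k + 1) u w

/-- `U →(J*,k) V`: `V` is obtained from `U` by a finite interleaving of
J-reductions and exactly `k` head reductions `→t`. -/
inductive JredTK : ℕ → LamH → LamH → Prop
  | refl (u : LamH) : JredTK 0 u u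
  | jstep {k : ℕ} {u v w : LamH} : Jred u v → JredTK k v w → JredTK k u w
  | tstep {k : ℕ} {u v w : LamH} : Head u v → JredTK k v w → JredTK (k + 1) u w

/-! `E` forgets every `H` that heads an application; an I-reduction deletes such an `H` and a
J-reduction moves it to the head of a subterm, so both leave `E` unchanged. A head step `u →t v` is
mirrored on the image: `E u →t w` for some `w` with `E v = E w` (only up to `E`, because a
substitution can create new head occurrences of `H`). Hence `E V₁` and `E V₂` both arise
from `E U₁ = E U₂` by `k` rounds of "head step, then `E`", and these rounds are
single-valued because head reduction is deterministic. -/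

def appErase : LamH → LamH → LamH
  | H, b => b
  | a, b => app a b

@[simp]
theorem appErase_H (b : LamH) : appErase H b = b := rfl

@[simp]
theorem appErase_lam (a b : LamH) : appErase (lam a) b = app (lam a) b := rfl

theorem appErase_of_ne_H {a : LamH} (h : a ≠ H) (b : LamH) : appErase a b = app a b := by
  cases a <;> simp_all [appErase]

theorem lift_appErase (a b : LamH) (d : ℕ) :
    lift (appErase a b) d = appErase (lift a d) (lift b d) := by
  cases a <;> simp [appErase, lift]
  split <;> rfl

@[simp]
theorem E_var (n : ℕ) : E (var n) = var n := by simp [E]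

@[simp]
theorem E_H : E H = H := by simp [E]

@[simp]
theorem E_lam (u : LamH) : E (lam u) = lam (E u) := by simp [E]

theorem E_app_of_headH_false {u : LamH} (h : headH u = false) (v : LamH) :
    E (app u v) = app (E u) (E v) := by
  rw [E]; simp [h]

theorem E_ne_H_of_headH_false : ∀ {u : LamH}, headH u = false → E u ≠ H
  | var _, _ | lam _, _ => by simp
  | app u v, h => by
    rw [E_app_of_headH_false (by simpa [headH] using h)]
    simp

theorem E_app : ∀ u v : LamH, E (app u v) = appErase (E u) (E v)
  | var n, v => by rw [E_app_of_headH_false (u := var n) rfl]; simp [appErase]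
  | lam u, v => by rw [E_app_of_headH_false (u := lam u) rfl]; simp
  | H, v => by rw [E]; simp [headH, dropH, E]
  | app a b, v => by
    cases h : headH (app a b)
    · rw [E_app_of_headH_false h, appErase_of_ne_H (E_ne_H_of_headH_false h)]
    · have ha : headH a = true := by simpa [headH] using h
      have hd : dropH (app (app a b) v) = app (dropH (app a b)) v := by cases a <;> rfl
      have hE : E (app (app a b) v) = E (app (dropH (app a b)) v) := by rw [E]; simp [h, hd]
      have hEab : E (app a b) = E (dropH (app a b)) := by rw [E]; simp [ha]
      rw [hE, E_app (dropH (app a b)) v, hEab]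
termination_by u => sizeOf u
decreasing_by
  have := dropH_app_size_lt a b ha
  simp only [app.sizeOf_spec] at *
  omega

theorem E_idem : ∀ u : LamH, E (E u) = E u
  | var _ | H => by simp
  | lam u => by simp [E_idem u]
  | app u v => by
    rw [E_app]
    by_cases h : E u = H
    · simp [h, E_idem v]
    · rw [appErase_of_ne_H h, E_app, E_idem u, E_idem v, appErase_of_ne_H h]

theorem E_lift : ∀ (u : LamH) (d : ℕ), E (lift u d) = lift (E u) d
  | var n, d => by simp only [E_var, lift]; split <;> simp
  | H, d => by simp [lift]
  | lam u, d => by simp [lift, E_lift u]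
  | app u v, d => by
    rw [lift, E_app, E_app, E_lift u, E_lift v, lift_appErase]

theorem E_subst : ∀ (u : LamH) (k : ℕ) (s : LamH),
    E (subst u k s) = E (subst (E u) k (E s))
  | var n, k, s => by
    simp only [E_var, subst]
    split
    · exact (E_idem s).symm
    · split <;> simp
  | H, k, s => by simp [subst]
  | lam u, k, s => by simp only [subst, E_lam, E_subst u, E_lift]
  | app u v, k, s => by
    rw [subst, E_app, E_app, E_subst u, E_subst v]
    by_cases h : E u = H
    · simp [h, subst]
    · rw [appErase_of_ne_H h, subst, E_app]

theorem E_eq_of_Ired {u v : LamH} (h : Ired u v) : E u = E v := by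
  induction h with
  | head v => simp [E_app]
  | appL v _ _ ih => rw [E_app, E_app, ih]
  | abs _ ih => rw [E_lam, E_lam, ih]

theorem E_eq_of_Jred {u v : LamH} (h : Jred u v) : E u = E v := by
  induction h with
  | one v => simp [E_app]
  | two u v => simp [E_app]
  | appL v _ _ _ ih => rw [E_app, E_app, ih]
  | abs _ ih => rw [E_lam, E_lam, ih]

theorem Head.det {t a b : LamH} (ha : Head t a) (hb : Head t b) : a = b := by
  induction ha generalizing b with
  | beta u v =>
    cases hb with
    | beta => rfl
    | appL _ _ hne => exact absurd rfl (hne u)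
  | appL v _ hne ih =>
    cases hb with
    | beta u' v' => exact absurd rfl (hne u')
    | appL _ h' _ => rw [ih h']
  | abs _ ih =>
    cases hb with
    | abs h' => rw [ih h']

theorem Head.E_ne_H {u u' : LamH} (h : Head u u') : E u ≠ H := by
  induction h with
  | beta a b => simp [E_app]
  | appL v _ _ ih => simp [E_app, appErase_of_ne_H ih]
  | abs _ _ => simp

theorem Head.E_eq_app {u u' : LamH} (h : Head u u') (hu : ∀ w, u ≠ lam w) :
    ∃ a b, E u = app a b := by
  cases h with
  | beta a b => exact ⟨lam (E a), E b, by simp [E_app]⟩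
  | @appL c _ v hc _ => exact ⟨E c, E v, by rw [E_app, appErase_of_ne_H hc.E_ne_H]⟩
  | abs _ => exact absurd rfl (hu _)

theorem Head.exists_E {u v : LamH} (h : Head u v) : ∃ w, Head (E u) w ∧ E v = E w := by
  induction h with
  | beta a b =>
    refine ⟨subst (E a) 0 (E b), ?_, E_subst a 0 b⟩
    simpa [E_app] using Head.beta (E a) (E b)
  | @appL c _ v hc hne ih =>
    obtain ⟨w, hw, hEw⟩ := ih
    obtain ⟨a, b, hab⟩ := hc.E_eq_app hne
    refine ⟨app w (E v), ?_, ?_⟩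
    · rw [E_app, appErase_of_ne_H hc.E_ne_H]
      exact Head.appL (E v) hw (by simp [hab])
    · rw [E_app, E_app, hEw, E_idem]
  | abs _ ih =>
    obtain ⟨w, hw, hEw⟩ := ih
    exact ⟨lam w, by simpa using Head.abs hw, by simp [hEw]⟩

inductive HeadEIter : ℕ → LamH → LamH → Prop
  | zero (a : LamH) : HeadEIter 0 a a
  | succ {k : ℕ} {a w b : LamH} : Head a w → HeadEIter k (E w) b → HeadEIter (k + 1) a b

theorem HeadEIter.det {k : ℕ} {a b b' : LamH} (hb : HeadEIter k a b) (hb' : HeadEIter k a b') :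
    b = b' := by
  induction hb with
  | zero => cases hb'; rfl
  | succ hw _ ih =>
    cases hb' with
    | succ hw' h' => exact ih (by rwa [hw.det hw'])

theorem HeadEIter.E_of_Head {k : ℕ} {u v b : LamH} (h : Head u v) (hv : HeadEIter k (E v) b) :
    HeadEIter (k + 1) (E u) b := by
  obtain ⟨w, hw, hEw⟩ := h.exists_E
  exact .succ hw (hEw ▸ hv)

theorem IredTK.headEIter_E {k : ℕ} {u v : LamH} (h : IredTK k u v) :
    HeadEIter k (E u) (E v) := by
  induction h with
  | refl u => exact .zero _
  | istep hi _ ih => rwa [E_eq_of_Ired hi]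
  | tstep ht _ ih => exact .E_of_Head ht ih

theorem JredTK.headEIter_E {k : ℕ} {u v : LamH} (h : JredTK k u v) :
    HeadEIter k (E u) (E v) := by
  induction h with
  | refl u => exact .zero _
  | jstep hj _ ih => rwa [E_eq_of_Jred hj]
  | tstep ht _ ih => exact .E_of_Head ht ih

/-- If `U₁ →(I*,k) V₁`, `U₂ →(J*,k) V₂` and `E(U₁) = E(U₂)`,
then `E(V₁) = E(V₂)`. -/
theorem E_IredTK_JredTK_congr (U₁ U₂ V₁ V₂ : LamH) (k : ℕ)
    (h₁ : IredTK k U₁ V₁) (h₂ : JredTK k U₂ V₂) (hE : E U₁ = E U₂) :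
    E V₁ = E V₂ :=
  h₁.headEIter_E.det (hE ▸ h₂.headEIter_E)

end LamH
end
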